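/- Let 0 < λ < Λ and work in dimension n = 1, where for s ∈ ℝ the Pucci operators are M⁺(s) = Λs if s ≥ 0 and λs if s < 0, and M⁻(s) = λs if s ≥ 0 and Λs if s < 0. Define u(x) = (max(x,0))²/2 and v(x) = −(max(x,0))²/2 on [−1,1]. Then (u,v) solves the two membranes problem on the interval (−1,1) with F = M⁺, G = M⁻, f ≡ Λ, g ≡ −Λ in the viscosity sense: u ≥ v on [−1,1]; M⁺(u'') ≤ Λ and M⁻(v'') ≥ −Λ in (−1,1) in the viscosity sense; and M⁺(u'') = Λ and M⁻(v'') = −Λ in the viscosity sense in the set Ω = {u > v} = (0,1). -/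

import Mathlib

open Set

noncomputable section

/-- The one-dimensional Pucci maximal operator: `M⁺(s) = Λ s` if `s ≥ 0` and `λ s` if `s < 0`. -/
def MPlus1 (lam Lam s : ℝ) : ℝ := if 0 ≤ s then Lam * s else lam * s

/-- The one-dimensional Pucci minimal operator: `M⁻(s) = λ s` if `s ≥ 0` and `Λ s` if `s < 0`. -/
def MMinus1 (lam Lam s : ℝ) : ℝ := if 0 ≤ s then lam * s else Lam * s

/-- `F(u'') ≤ f` in `I` in the viscosity sense: whenever a `C²` function `φ` touches `u` from
below at `x₀ ∈ I`, then `F(φ''(x₀)) ≤ f(x₀)`. -/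
def ViscLE1 (F : ℝ → ℝ) (u f : ℝ → ℝ) (I : Set ℝ) : Prop :=
  ∀ φ : ℝ → ℝ, ContDiff ℝ 2 φ → ∀ x₀ ∈ I, (∀ x ∈ I, φ x ≤ u x) → φ x₀ = u x₀ →
    F (deriv (deriv φ) x₀) ≤ f x₀

/-- `F(u'') ≥ f` in `I` in the viscosity sense: whenever a `C²` function `φ` touches `u` from
above at `x₀ ∈ I`, then `F(φ''(x₀)) ≥ f(x₀)`. -/
def ViscGE1 (F : ℝ → ℝ) (u f : ℝ → ℝ) (I : Set ℝ) : Prop :=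
  ∀ φ : ℝ → ℝ, ContDiff ℝ 2 φ → ∀ x₀ ∈ I, (∀ x ∈ I, u x ≤ φ x) → φ x₀ = u x₀ →
    f x₀ ≤ F (deriv (deriv φ) x₀)

open Filter Topology

/-! `u = (x₊)²/2` is touched from above at every point by a `C²` function with second derivative
at most `1` (namely `0` left of the origin and `x²/2` elsewhere), and it coincides with `x²/2` on
`(0, 1)`. Since `M⁺` is monotone with `M⁺(1) = Λ`, comparing second derivatives at a touching
point gives the inequalities for `u`. Those for `v = -u` follow from the duality
`M⁻(s) = -M⁺(-s)`, which swaps sub- and supersolutions. -/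

theorem IsLocalMin.deriv_deriv_nonneg {f : ℝ → ℝ} {a : ℝ} (hmin : IsLocalMin f a)
    (hc : ContinuousAt f a) : 0 ≤ deriv (deriv f) a := by
  by_contra! hneg
  have hmax : IsLocalMax f a := isLocalMax_of_deriv_deriv_neg hneg hmin.deriv_eq_zero hc
  have hconst : f =ᶠ[𝓝 a] fun _ => f a := by
    filter_upwards [hmin, hmax] with x h₁ h₂ using le_antisymm h₂ h₁
  have hzero : deriv (deriv f) a = 0 := by
    rw [hconst.deriv.deriv_eq]
    simp
  exact hneg.ne hzero

theorem deriv_deriv_le_of_eventuallyLE {φ ψ : ℝ → ℝ} {a : ℝ} (hφ : ContDiff ℝ 2 φ)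
    (hψ : ContDiff ℝ 2 ψ) (hle : φ ≤ᶠ[𝓝 a] ψ) (heq : φ a = ψ a) :
    deriv (deriv φ) a ≤ deriv (deriv ψ) a := by
  have hmin : IsLocalMin (ψ - φ) a := by
    filter_upwards [hle] with x hx
    simp only [Pi.sub_apply, heq, sub_self, sub_nonneg, hx]
  have hderiv : deriv (ψ - φ) = deriv ψ - deriv φ :=
    funext fun x => deriv_sub (hψ.differentiable two_ne_zero x) (hφ.differentiable two_ne_zero x)
  have key := hmin.deriv_deriv_nonneg (hψ.continuous.sub hφ.continuous).continuousAt
  rw [hderiv, deriv_sub (hψ.differentiable_deriv_two a) (hφ.differentiable_deriv_two a)] at key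
  linarith

section Viscosity

variable {F u f : ℝ → ℝ} {I : Set ℝ}

theorem ViscLE1.of_touching_above (hI : IsOpen I) (hF : Monotone F)
    (h : ∀ x₀ ∈ I, ∃ w, ContDiff ℝ 2 w ∧ u ≤ᶠ[𝓝 x₀] w ∧ w x₀ = u x₀ ∧
      F (deriv (deriv w) x₀) ≤ f x₀) :
    ViscLE1 F u f I := by
  intro φ hφ x₀ hx₀ hφu hφx₀
  obtain ⟨w, hw, huw, hwx₀, hFw⟩ := h x₀ hx₀
  have hφw : φ ≤ᶠ[𝓝 x₀] w := by
    filter_upwards [hI.mem_nhds hx₀, huw] with x hxI hx using (hφu x hxI).trans hx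
  exact (hF (deriv_deriv_le_of_eventuallyLE hφ hw hφw (hφx₀.trans hwx₀.symm))).trans hFw

theorem ViscGE1.of_touching_below (hI : IsOpen I) (hF : Monotone F)
    (h : ∀ x₀ ∈ I, ∃ w, ContDiff ℝ 2 w ∧ w ≤ᶠ[𝓝 x₀] u ∧ w x₀ = u x₀ ∧
      f x₀ ≤ F (deriv (deriv w) x₀)) :
    ViscGE1 F u f I := by
  intro φ hφ x₀ hx₀ huφ hφx₀
  obtain ⟨w, hw, hwu, hwx₀, hFw⟩ := h x₀ hx₀
  have hwφ : w ≤ᶠ[𝓝 x₀] φ := by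
    filter_upwards [hI.mem_nhds hx₀, hwu] with x hxI hx using hx.trans (huφ x hxI)
  exact hFw.trans (hF (deriv_deriv_le_of_eventuallyLE hw hφ hwφ (hwx₀.trans hφx₀.symm)))

theorem ViscLE1.neg (h : ViscLE1 F u f I) : ViscGE1 (fun s => -F (-s)) (-u) (-f) I := by
  intro φ hφ x₀ hx₀ huφ hφx₀
  have key := h (-φ) hφ.neg x₀ hx₀ (fun x hx => neg_le.mp (huφ x hx)) (by simp [hφx₀])
  simpa [deriv.neg'] using key

theorem ViscGE1.neg (h : ViscGE1 F u f I) : ViscLE1 (fun s => -F (-s)) (-u) (-f) I := by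
  intro φ hφ x₀ hx₀ hφu hφx₀
  have key := h (-φ) hφ.neg x₀ hx₀ (fun x hx => le_neg.mp (hφu x hx)) (by simp [hφx₀])
  simpa [deriv.neg'] using key

end Viscosity

theorem monotone_MPlus1 {lam Lam : ℝ} (hlam : 0 ≤ lam) (hLam : 0 ≤ Lam) :
    Monotone (MPlus1 lam Lam) := by
  intro s t hst
  unfold MPlus1
  split_ifs <;> nlinarith

theorem MPlus1_zero (lam Lam : ℝ) : MPlus1 lam Lam 0 = 0 := by
  simp [MPlus1]

theorem MPlus1_one (lam Lam : ℝ) : MPlus1 lam Lam 1 = Lam := by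
  simp [MPlus1]

theorem MMinus1_eq_neg_MPlus1_neg (lam Lam : ℝ) :
    MMinus1 lam Lam = fun s => -MPlus1 lam Lam (-s) := by
  funext s
  unfold MMinus1 MPlus1
  rcases lt_trichotomy s 0 with hs | rfl | hs
  · simp [hs.not_ge, hs.le]
  · simp
  · simp [hs.le, hs.not_ge]

theorem deriv_deriv_sq_div_two (x : ℝ) : deriv (deriv fun x : ℝ => x ^ 2 / 2) x = 1 := by
  have hderiv : deriv (fun x : ℝ => x ^ 2 / 2) = id := by
    funext y
    simp
  simp [hderiv]

theorem max_zero_sq_div_two_le (x : ℝ) : max x 0 ^ 2 / 2 ≤ x ^ 2 / 2 := by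
  rcases le_total x 0 with h | h
  · rw [max_eq_right h, zero_pow two_ne_zero, zero_div]
    positivity
  · rw [max_eq_left h]

theorem max_zero_sq_div_two_eventuallyEq_zero {x₀ : ℝ} (h : x₀ < 0) :
    (fun x : ℝ => max x 0 ^ 2 / 2) =ᶠ[𝓝 x₀] fun _ => 0 := by
  filter_upwards [Iio_mem_nhds h] with x hx
  simp [max_eq_right (mem_Iio.mp hx).le]

theorem max_zero_sq_div_two_eventuallyEq_sq {x₀ : ℝ} (h : 0 < x₀) :
    (fun x : ℝ => max x 0 ^ 2 / 2) =ᶠ[𝓝 x₀] fun x => x ^ 2 / 2 := by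
  filter_upwards [Ioi_mem_nhds h] with x hx
  rw [max_eq_left (mem_Ioi.mp hx).le]

theorem max_zero_sq_div_two_pos_iff {x : ℝ} : 0 < max x 0 ^ 2 / 2 ↔ 0 < x := by
  rcases le_or_gt x 0 with h | h
  · simp [h]
  · simp [h, max_eq_left h.le]

section HalfSquaredPositivePart

variable {lam Lam : ℝ} {I : Set ℝ}

theorem viscLE1_MPlus1_max_zero_sq_div_two (hlam : 0 ≤ lam) (hLam : 0 ≤ Lam) (hI : IsOpen I) :
    ViscLE1 (MPlus1 lam Lam) (fun x => max x 0 ^ 2 / 2) (fun _ => Lam) I := by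
  refine ViscLE1.of_touching_above hI (monotone_MPlus1 hlam hLam) fun x₀ _ => ?_
  rcases lt_or_ge x₀ 0 with hneg | hnonneg
  · refine ⟨fun _ => 0, contDiff_const, (max_zero_sq_div_two_eventuallyEq_zero hneg).le,
      (max_zero_sq_div_two_eventuallyEq_zero hneg).eq_of_nhds.symm, ?_⟩
    simpa [MPlus1_zero] using hLam
  · refine ⟨fun x => x ^ 2 / 2, by fun_prop, Eventually.of_forall max_zero_sq_div_two_le,
      by rw [max_eq_left hnonneg], ?_⟩
    rw [deriv_deriv_sq_div_two, MPlus1_one]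

theorem viscGE1_MPlus1_max_zero_sq_div_two (hlam : 0 ≤ lam) (hLam : 0 ≤ Lam) (hI : IsOpen I)
    (hIpos : I ⊆ Ioi 0) :
    ViscGE1 (MPlus1 lam Lam) (fun x => max x 0 ^ 2 / 2) (fun _ => Lam) I := by
  refine ViscGE1.of_touching_below hI (monotone_MPlus1 hlam hLam) fun x₀ hx₀ => ?_
  have hsq := max_zero_sq_div_two_eventuallyEq_sq (hIpos hx₀)
  refine ⟨fun x => x ^ 2 / 2, by fun_prop, hsq.symm.le, hsq.eq_of_nhds.symm, ?_⟩
  rw [deriv_deriv_sq_div_two, MPlus1_one]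

end HalfSquaredPositivePart

/-- **Optimality example.** In dimension one, `u(x) = (x₊)²/2` and `v(x) = −(x₊)²/2` solve the
two membranes problem on `(−1, 1)` with `F = M⁺`, `G = M⁻`, `f ≡ Λ`, `g ≡ −Λ` in the viscosity
sense: `u ≥ v`; `M⁺(u'') ≤ Λ` and `M⁻(v'') ≥ −Λ` in `(−1, 1)`; and `M⁺(u'') = Λ`,
`M⁻(v'') = −Λ` in `Ω = {u > v} = (0, 1)`. -/
theorem one_dim_two_membranes_example
    (lam Lam : ℝ) (hlam : 0 < lam) (hLam : lam < Lam) :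
    let u : ℝ → ℝ := fun x => (max x 0) ^ 2 / 2
    let v : ℝ → ℝ := fun x => -((max x 0) ^ 2 / 2)
    (∀ x ∈ Icc (-1 : ℝ) 1, v x ≤ u x) ∧
    ViscLE1 (MPlus1 lam Lam) u (fun _ => Lam) (Ioo (-1) 1) ∧
    ViscGE1 (MMinus1 lam Lam) v (fun _ => -Lam) (Ioo (-1) 1) ∧
    {x | x ∈ Ioo (-1 : ℝ) 1 ∧ v x < u x} = Ioo (0 : ℝ) 1 ∧
    (ViscLE1 (MPlus1 lam Lam) u (fun _ => Lam) (Ioo 0 1) ∧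
      ViscGE1 (MPlus1 lam Lam) u (fun _ => Lam) (Ioo 0 1)) ∧
    (ViscLE1 (MMinus1 lam Lam) v (fun _ => -Lam) (Ioo 0 1) ∧
      ViscGE1 (MMinus1 lam Lam) v (fun _ => -Lam) (Ioo 0 1)) := by
  intro u v
  have hLam₀ : 0 ≤ Lam := hlam.le.trans hLam.le
  have hsub : ViscLE1 (MPlus1 lam Lam) u (fun _ => Lam) (Ioo (-1) 1) :=
    viscLE1_MPlus1_max_zero_sq_div_two hlam.le hLam₀ isOpen_Ioo
  have hsubΩ : ViscLE1 (MPlus1 lam Lam) u (fun _ => Lam) (Ioo 0 1) :=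
    viscLE1_MPlus1_max_zero_sq_div_two hlam.le hLam₀ isOpen_Ioo
  have hsuperΩ : ViscGE1 (MPlus1 lam Lam) u (fun _ => Lam) (Ioo 0 1) :=
    viscGE1_MPlus1_max_zero_sq_div_two hlam.le hLam₀ isOpen_Ioo Ioo_subset_Ioi_self
  rw [MMinus1_eq_neg_MPlus1_neg]
  refine ⟨fun x _ => neg_le_self (by positivity), hsub, hsub.neg, ?_, ⟨hsubΩ, hsuperΩ⟩,
    hsuperΩ.neg, hsubΩ.neg⟩
  ext x
  simp only [u, v, mem_ofPred_eq, mem_Ioo, neg_lt_self_iff, max_zero_sq_div_two_pos_iff]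
  grind
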